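/- Let σ₁, σ₂, σ₃ be permutations of Fin 4. Let M be the free ℤ-module with basis H, E₁,…,E₄, P₁,…,P₄, Q₁,…,Q₄, and let f : M → M be the ℤ-linear map with f(H) = 3H − 2(P₁+…+P₄), f(Eᵢ) = H − Σ_{j ≠ i} P_{σ₁(j)}, f(Pᵢ) = Q_{σ₂(i)}, f(Qᵢ) = E_{σ₃(i)}. Define integer sequences by d₀ = 1, f₀ = b₀ = c₀ = 0 and dₙ = 3d_{n−1} − 4f_{n−1}, fₙ = c_{n−1}, bₙ = 2d_{n−1} − 3f_{n−1}, cₙ = b_{n−1}. Then for every natural number n, fⁿ(H) = dₙ·H − fₙ·(E₁+…+E₄) − bₙ·(P₁+…+P₄) − cₙ·(Q₁+…+Q₄). -/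

import Mathlib

noncomputable section

/-- Index type for the basis `H, E₁,…,E₄, P₁,…,P₄, Q₁,…,Q₄`. -/
abbrev IdxC := Unit ⊕ Fin 4 ⊕ Fin 4 ⊕ Fin 4

/-- The free ℤ-module with basis `H, E₁,…,E₄, P₁,…,P₄, Q₁,…,Q₄`. -/
abbrev ModC := IdxC → ℤ

/-- The basis vector `H` (pullback of the hyperplane class). -/
def Hc : ModC := Pi.single (Sum.inl ()) 1

/-- The basis vectors `Eᵢ` (exceptional divisors over the coordinate points `eᵢ`). -/
def Ec (i : Fin 4) : ModC := Pi.single (Sum.inr (Sum.inl i)) 1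

/-- The basis vectors `Pᵢ` (exceptional divisors over the points `pᵢ`). -/
def Pc (i : Fin 4) : ModC := Pi.single (Sum.inr (Sum.inr (Sum.inl i))) 1

/-- The basis vectors `Qᵢ` (exceptional divisors over the points `qᵢ`). -/
def Qc (i : Fin 4) : ModC := Pi.single (Sum.inr (Sum.inr (Sum.inr i))) 1

/-!
The classes `H`, `∑ Eᵢ`, `∑ Pᵢ`, `∑ Qᵢ` span an `f`-invariant sublattice: the permutations `σᵢ`
disappear once one sums over an index, and `f` acts on these four classes by
`H ↦ 3H − 2∑P`, `∑E ↦ 4H − 3∑P`, `∑P ↦ ∑Q`, `∑Q ↦ ∑E`. The recursion for `(dₙ, fₙ, bₙ, cₙ)` is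
exactly this action in coordinates, so the formula follows by induction on `n`.
-/

theorem LinearMap.map_sum_of_map_eq_comp_perm {R M N ι : Type*} [Semiring R]
    [AddCommMonoid M] [AddCommMonoid N] [Module R M] [Module R N] [Fintype ι] (f : M →ₗ[R] N)
    (σ : Equiv.Perm ι) (v : ι → M) (w : ι → N) (h : ∀ i, f (v i) = w (σ i)) :
    f (∑ i, v i) = ∑ i, w i := by
  simp only [map_sum, h]
  exact Equiv.sum_comp σ w

section

variable {R M : Type*} [Semiring R] [AddCommGroup M] [Module R M] (f : Module.End R M)
  {h e p q : M}

theorem map_zsmul_combination_eq (hh : f h = 3 • h - 2 • p) (he : f e = 4 • h - 3 • p)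
    (hp : f p = q) (hq : f q = e) (d s b c : ℤ) :
    f (d • h - s • e - b • p - c • q) =
      (3 * d - 4 * s) • h - c • e - (2 * d - 3 * s) • p - b • q := by
  simp only [map_sub, map_zsmul, hh, he, hp, hq]
  module

theorem pow_apply_eq_zsmul_combination (hh : f h = 3 • h - 2 • p) (he : f e = 4 • h - 3 • p)
    (hp : f p = q) (hq : f q = e) (d s b c : ℕ → ℤ)
    (hd0 : d 0 = 1) (hs0 : s 0 = 0) (hb0 : b 0 = 0) (hc0 : c 0 = 0)
    (hd : ∀ n, d (n + 1) = 3 * d n - 4 * s n) (hs : ∀ n, s (n + 1) = c n)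
    (hb : ∀ n, b (n + 1) = 2 * d n - 3 * s n) (hc : ∀ n, c (n + 1) = b n) (n : ℕ) :
    (f ^ n) h = d n • h - s n • e - b n • p - c n • q := by
  induction n with
  | zero => simp [hd0, hs0, hb0, hc0]
  | succ n ih =>
    rw [pow_succ', Module.End.mul_apply, ih, map_zsmul_combination_eq f hh he hp hq,
      hd, hs, hb, hc]

end

/-- The action on cohomology of a map `Φ = g∘crem₃` with `g` of type (C): for every `n`,
`fⁿ(H) = dₙH − fₙ(E₁+⋯+E₄) − bₙ(P₁+⋯+P₄) − cₙ(Q₁+⋯+Q₄)` where the coefficients satisfy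
the stated system of difference equations. -/
theorem typeC_degree_growth (σ₁ σ₂ σ₃ : Equiv.Perm (Fin 4)) (f : Module.End ℤ ModC)
    (hH : f Hc = 3 • Hc - 2 • ∑ j : Fin 4, Pc j)
    (hE : ∀ i : Fin 4, f (Ec i) = Hc - ∑ j ∈ Finset.univ.filter (· ≠ i), Pc (σ₁ j))
    (hP : ∀ i : Fin 4, f (Pc i) = Qc (σ₂ i))
    (hQ : ∀ i : Fin 4, f (Qc i) = Ec (σ₃ i))
    (d fs b c : ℕ → ℤ)
    (hd0 : d 0 = 1) (hf0 : fs 0 = 0) (hb0 : b 0 = 0) (hc0 : c 0 = 0)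
    (hd : ∀ n : ℕ, d (n + 1) = 3 * d n - 4 * fs n)
    (hf : ∀ n : ℕ, fs (n + 1) = c n)
    (hb : ∀ n : ℕ, b (n + 1) = 2 * d n - 3 * fs n)
    (hc : ∀ n : ℕ, c (n + 1) = b n) :
    ∀ n : ℕ, (f ^ n) Hc =
      d n • Hc - fs n • ∑ j : Fin 4, Ec j - b n • ∑ j : Fin 4, Pc j
        - c n • ∑ j : Fin 4, Qc j := by
  have hSE : f (∑ j, Ec j) = 4 • Hc - 3 • ∑ j, Pc j := by
    have hE' : ∀ i, f (Ec i) = Hc - ((∑ j, Pc j) - Pc (σ₁ i)) := fun i => by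
      rw [hE, Finset.filter_ne', Finset.sum_erase_eq_sub (Finset.mem_univ i),
        Equiv.sum_comp σ₁ Pc]
    simp only [map_sum, hE', Finset.sum_sub_distrib, Equiv.sum_comp σ₁ Pc, Finset.sum_const,
      Finset.card_univ, Fintype.card_fin]
    module
  have hSP := f.map_sum_of_map_eq_comp_perm σ₂ Pc Qc hP
  have hSQ := f.map_sum_of_map_eq_comp_perm σ₃ Qc Ec hQ
  exact pow_apply_eq_zsmul_combination f hH hSE hSP hSQ d fs b c hd0 hf0 hb0 hc0 hd hf hb hc
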